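/- arXiv:2106.09503 — 4 statements merged into one kernel-verified Lean document; each statement's English description precedes it below -/
import Mathlib

section
/- Let m ≥ 1, let x̂ ∈ Δ^m be a target distribution, and let D : Δ₊^m × Δ₊^m → ℝ be jointly convex with D(x; x̄) ∈ [0, r̄] for all x, x̄ ∈ Δ₊^m, such that for each fixed γ ∈ [0,1] the map x̄ ↦ D(γx̂; x̄) is L-Lipschitz with respect to the ℓp norm. Then the parity ray regularizer R(x̄) := −min_{γ∈[0,1]} D(γx̂; x̄) is concave on Δ₊^m, takes values in [−r̄, 0], is L-Lipschitz continuous with respect to the ℓp norm on Δ₊^m, and is upper semicontinuous (closed as a concave function). -/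
open scoped BigOperators

/-- The simplex `Δ^m = {x : x_i ≥ 0, ∑ x_i = 1}`. -/
def simplexEq (m : ℕ) : Set (Fin m → ℝ) := {x | (∀ i, 0 ≤ x i) ∧ ∑ i, x i = 1}

/-- The full-dimensional standard simplex `Δ₊^m = {x : x_i ≥ 0, ∑ x_i ≤ 1}`. -/
def simplexLe (m : ℕ) : Set (Fin m → ℝ) := {x | (∀ i, 0 ≤ x i) ∧ ∑ i, x i ≤ 1}

/-- The ℓp norm on `Fin m → ℝ`. -/
noncomputable def lpNorm (p : ENNReal) [Fact (1 ≤ p)] {m : ℕ} (x : Fin m → ℝ) : ℝ :=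
  ‖(WithLp.equiv p (Fin m → ℝ)).symm x‖

lemma lpNorm_sub_comm (p : ENNReal) [Fact (1 ≤ p)] {m : ℕ} (x y : Fin m → ℝ) :
    lpNorm p (x - y) = lpNorm p (y - x) := by
  unfold lpNorm
  have h : (WithLp.equiv p (Fin m → ℝ)).symm (x - y)
      = -((WithLp.equiv p (Fin m → ℝ)).symm (y - x)) := by
    rw [← neg_sub y x]; rfl
  rw [h, norm_neg]

lemma smul_xhat_mem {m : ℕ} {xhat : Fin m → ℝ} (hxhat : xhat ∈ simplexEq m)
    {γ : ℝ} (hγ : γ ∈ Set.Icc (0 : ℝ) 1) : γ • xhat ∈ simplexLe m := by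
  obtain ⟨hpos, hsum⟩ := hxhat
  refine ⟨fun i => mul_nonneg hγ.1 (hpos i), ?_⟩
  have : ∑ i, (γ • xhat) i = γ * ∑ i, xhat i := by
    simp [Finset.mul_sum]
  rw [this, hsum, mul_one]; exact hγ.2

lemma simplexLe_convex (m : ℕ) : Convex ℝ (simplexLe m) := by
  intro x hx y hy a b ha hb hab
  refine ⟨fun i => add_nonneg (mul_nonneg ha (hx.1 i)) (mul_nonneg hb (hy.1 i)), ?_⟩
  have : ∑ i, (a • x + b • y) i = a * ∑ i, x i + b * ∑ i, y i := by
    simp [Finset.sum_add_distrib, Finset.mul_sum]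
  rw [this]
  calc a * ∑ i, x i + b * ∑ i, y i ≤ a * 1 + b * 1 := by
        gcongr
        · exact hx.2
        · exact hy.2
    _ = 1 := by rw [mul_one, mul_one, hab]

/-- Properties of the parity ray regularizer
`R(x̄) = −min_{γ∈[0,1]} D(γ x̂; x̄)`: it is concave on `Δ₊^m`, takes values in `[−r̄, 0]`,
is `L`-Lipschitz with respect to the ℓp norm on `Δ₊^m`, and is upper semicontinuous
(closed as a concave function) on `Δ₊^m`. -/
theorem parity_ray_regularizer_properties
    (m : ℕ) (hm : 1 ≤ m) (p : ENNReal) [Fact (1 ≤ p)]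
    (xhat : Fin m → ℝ) (hxhat : xhat ∈ simplexEq m)
    (D : (Fin m → ℝ) → (Fin m → ℝ) → ℝ) (rbar L : ℝ)
    (hDconv : ConvexOn ℝ ((simplexLe m) ×ˢ (simplexLe m))
      (fun q : (Fin m → ℝ) × (Fin m → ℝ) => D q.1 q.2))
    (hDbdd : ∀ x ∈ simplexLe m, ∀ y ∈ simplexLe m, D x y ∈ Set.Icc (0 : ℝ) rbar)
    (hDlip : ∀ γ ∈ Set.Icc (0 : ℝ) 1, ∀ x ∈ simplexLe m, ∀ y ∈ simplexLe m,
      |D (γ • xhat) x - D (γ • xhat) y| ≤ L * lpNorm p (x - y))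
    (R : (Fin m → ℝ) → ℝ)
    (hR : ∀ x, R x = - sInf ((fun γ : ℝ => D (γ • xhat) x) '' Set.Icc (0 : ℝ) 1)) :
    ConcaveOn ℝ (simplexLe m) R ∧
    (∀ x ∈ simplexLe m, R x ∈ Set.Icc (-rbar) (0 : ℝ)) ∧
    (∀ x ∈ simplexLe m, ∀ y ∈ simplexLe m, |R x - R y| ≤ L * lpNorm p (x - y)) ∧
    UpperSemicontinuousOn R (simplexLe m) := by
  set S : (Fin m → ℝ) → Set ℝ :=
    fun x => (fun γ : ℝ => D (γ • xhat) x) '' Set.Icc (0 : ℝ) 1 with hS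
  set f : (Fin m → ℝ) → ℝ := fun x => sInf (S x) with hf
  have hzero : (0 : ℝ) ∈ Set.Icc (0 : ℝ) 1 := ⟨le_refl 0, zero_le_one⟩
  have hne : ∀ x, (S x).Nonempty := fun x => ⟨D ((0 : ℝ) • xhat) x, ⟨0, hzero, rfl⟩⟩
  have hbdd : ∀ x ∈ simplexLe m, ∀ z ∈ S x, (0 : ℝ) ≤ z := by
    rintro x hx z ⟨γ, hγ, rfl⟩
    exact (hDbdd _ (smul_xhat_mem hxhat hγ) _ hx).1
  have hbddBelow : ∀ x ∈ simplexLe m, BddBelow (S x) := fun x hx => ⟨0, hbdd x hx⟩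
  have hRf : R = fun x => -(f x) := funext fun x => hR x
  -- one-sided Lipschitz estimate for f
  have hlip1 : ∀ x ∈ simplexLe m, ∀ y ∈ simplexLe m,
      f x - f y ≤ L * lpNorm p (x - y) := by
    intro x hx y hy
    have hkey : f x - L * lpNorm p (x - y) ≤ sInf (S y) := by
      refine le_csInf (hne y) ?_
      rintro z ⟨γ, hγ, rfl⟩
      have h1 : f x ≤ D (γ • xhat) x := csInf_le (hbddBelow x hx) ⟨γ, hγ, rfl⟩
      have h2 := hDlip γ hγ x hx y hy
      have h3 : D (γ • xhat) x - D (γ • xhat) y ≤ L * lpNorm p (x - y) :=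
        le_trans (le_abs_self _) h2
      simp only
      linarith
    have hfy : f y = sInf (S y) := rfl
    rw [hfy]
    linarith
  have hlip : ∀ x ∈ simplexLe m, ∀ y ∈ simplexLe m,
      |f x - f y| ≤ L * lpNorm p (x - y) := by
    intro x hx y hy
    rw [abs_sub_le_iff]
    refine ⟨hlip1 x hx y hy, ?_⟩
    rw [lpNorm_sub_comm]
    exact hlip1 y hy x hx
  -- convexity of f
  have hfconv : ConvexOn ℝ (simplexLe m) f := by
    refine ⟨simplexLe_convex m, ?_⟩
    intro x hx y hy a b ha hb hab
    refine le_of_forall_pos_le_add ?_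
    intro ε hε
    obtain ⟨z₁, ⟨γ₁, hγ₁, rfl⟩, hz₁⟩ :=
      exists_lt_of_csInf_lt (hne x) (lt_add_of_pos_right (f x) hε)
    obtain ⟨z₂, ⟨γ₂, hγ₂, rfl⟩, hz₂⟩ :=
      exists_lt_of_csInf_lt (hne y) (lt_add_of_pos_right (f y) hε)
    have hγ : a * γ₁ + b * γ₂ ∈ Set.Icc (0 : ℝ) 1 := by
      constructor
      · exact add_nonneg (mul_nonneg ha hγ₁.1) (mul_nonneg hb hγ₂.1)
      · calc a * γ₁ + b * γ₂ ≤ a * 1 + b * 1 := by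
              gcongr
              · exact hγ₁.2
              · exact hγ₂.2
          _ = 1 := by rw [mul_one, mul_one, hab]
    have hxy := simplexLe_convex m hx hy ha hb hab
    have hstep : f (a • x + b • y) ≤ D ((a * γ₁ + b * γ₂) • xhat) (a • x + b • y) :=
      csInf_le (hbddBelow _ hxy) ⟨a * γ₁ + b * γ₂, hγ, rfl⟩
    have hq₁ : ((γ₁ • xhat, x) : (Fin m → ℝ) × (Fin m → ℝ)) ∈
        (simplexLe m) ×ˢ (simplexLe m) := ⟨smul_xhat_mem hxhat hγ₁, hx⟩
    have hq₂ : ((γ₂ • xhat, y) : (Fin m → ℝ) × (Fin m → ℝ)) ∈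
        (simplexLe m) ×ˢ (simplexLe m) := ⟨smul_xhat_mem hxhat hγ₂, hy⟩
    have hconv := hDconv.2 hq₁ hq₂ ha hb hab
    have heq : (a • ((γ₁ • xhat, x) : (Fin m → ℝ) × (Fin m → ℝ))
        + b • (γ₂ • xhat, y)) = ((a * γ₁ + b * γ₂) • xhat, a • x + b • y) := by
      simp [Prod.ext_iff, smul_smul, add_smul]
    rw [heq] at hconv
    simp only [smul_eq_mul] at hconv
    calc f (a • x + b • y) ≤ D ((a * γ₁ + b * γ₂) • xhat) (a • x + b • y) := hstep
      _ ≤ a * D (γ₁ • xhat) x + b * D (γ₂ • xhat) y := hconv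
      _ ≤ a * (f x + ε) + b * (f y + ε) :=
          add_le_add (mul_le_mul_of_nonneg_left (le_of_lt hz₁) ha)
            (mul_le_mul_of_nonneg_left (le_of_lt hz₂) hb)
      _ = a • f x + b • f y + ε := by
          simp only [smul_eq_mul]
          have h : a * ε + b * ε = ε := by rw [← add_mul, hab, one_mul]
          linarith
  refine ⟨?_, ?_, ?_, ?_⟩
  · rw [hRf]
    exact hfconv.neg
  · intro x hx
    have h1 : 0 ≤ f x := le_csInf (hne x) (hbdd x hx)
    have h2 : f x ≤ rbar := by
      refine le_trans (csInf_le (hbddBelow x hx) ⟨0, hzero, rfl⟩) ?_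
      exact (hDbdd _ (smul_xhat_mem hxhat hzero) _ hx).2
    rw [hR x]
    exact ⟨neg_le_neg h2, neg_nonpos_of_nonneg h1⟩
  · intro x hx y hy
    rw [hR x, hR y]
    have : -f x - -f y = -(f x - f y) := by ring
    rw [this, abs_neg]
    exact hlip x hx y hy
  · have hcont : ContinuousOn R (simplexLe m) := by
      intro x hx
      rw [ContinuousWithinAt, tendsto_iff_dist_tendsto_zero]
      have hg : Filter.Tendsto (fun y => L * lpNorm p (y - x)) (nhdsWithin x (simplexLe m))
          (nhds 0) := by
        have hcg : Continuous (fun y : Fin m → ℝ => L * lpNorm p (y - x)) := by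
          unfold lpNorm
          have h1 : Continuous fun y : Fin m → ℝ =>
              (WithLp.equiv p (Fin m → ℝ)).symm (y - x) := by
            exact (PiLp.continuous_toLp p (fun _ : Fin m => ℝ)).comp
              (continuous_id.sub continuous_const)
          exact continuous_const.mul (h1.norm)
        have h0 : L * lpNorm p (x - x) = 0 := by
          simp only [sub_self]
          have : lpNorm p (0 : Fin m → ℝ) = 0 := by
            unfold lpNorm
            have : (WithLp.equiv p (Fin m → ℝ)).symm 0 = 0 := rfl
            rw [this, norm_zero]
          rw [this, mul_zero]
        have := (hcg.tendsto x).mono_left (nhdsWithin_le_nhds (s := simplexLe m))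
        rwa [h0] at this
      refine squeeze_zero' ?_ ?_ hg
      · exact Filter.Eventually.of_forall fun y => dist_nonneg
      · filter_upwards [self_mem_nhdsWithin] with y hy
        rw [Real.dist_eq]
        have := hlip y hy x hx
        rw [hR y, hR x]
        have heq : -f y - -f x = -(f y - f x) := by ring
        rw [heq, abs_neg]
        exact this
    exact hcont.upperSemicontinuousOn
end

section
/- Fix T ≥ 1, ρ > 0, input tuples (v_t, p_t, c_t) for t = 1,…,T with v_t ≥ 0, p_t ≥ 0 and c_t ∈ Δ^m, and a function R : Δ₊^m → ℝ whose conjugate R*(−λ) = sup_{x̄∈Δ₊^m}{R(x̄) + ⟨λ, x̄⟩} is finite at λ. Then for every μ ≥ 0 and λ ∈ ℝ^m, and for every allocation x ∈ [0,1]^T satisfying the budget constraint ∑_{t=1}^T p_t x_t ≤ Tρ, it holds that ∑_{t=1}^T (v_t − p_t)x_t + T·R((1/T)∑_{t=1}^T c_t x_t) ≤ ∑_{t=1}^T f_t*(μ p_t + ⟨λ, c_t⟩) + T·R*(−λ) + Tρμ, where f_t*(s) = sup_{x∈[0,1]}{(v_t − p_t)x − s x}. -/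
open scoped BigOperators

/-- Euclidean inner product on `Fin m → ℝ`. -/
def dot {m : ℕ} (a b : Fin m → ℝ) : ℝ := ∑ i, a i * b i

/-- Pathwise weak duality: for any feasible allocation `x ∈ [0,1]^T` with
`∑ p_t x_t ≤ Tρ`, any `μ ≥ 0`, `λ ∈ ℝ^m`, the parity-regularized reward is bounded by the
Lagrangian dual value `∑ f_t*(μ p_t + ⟨λ, c_t⟩) + T R*(−λ) + T ρ μ`. -/
theorem pathwise_weak_duality
    (m T : ℕ) (hm : 1 ≤ m) (hT : 1 ≤ T) (ρ : ℝ) (hρ : 0 < ρ)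
    (v p : Fin T → ℝ) (c : Fin T → Fin m → ℝ)
    (hv : ∀ t, 0 ≤ v t) (hp : ∀ t, 0 ≤ p t) (hc : ∀ t, c t ∈ simplexEq m)
    (R : (Fin m → ℝ) → ℝ)
    (fstar : Fin T → ℝ → ℝ)
    (hfstar : ∀ t s, fstar t s
      = sSup ((fun x => (v t - p t) * x - s * x) '' Set.Icc (0 : ℝ) 1))
    (Rstar : (Fin m → ℝ) → ℝ)
    (hRstar : ∀ lam : Fin m → ℝ,
      Rstar lam = sSup ((fun xb => R xb + dot lam xb) '' simplexLe m))
    (μ : ℝ) (lam : Fin m → ℝ) (hμ : 0 ≤ μ)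
    (hfin : BddAbove ((fun xb => R xb + dot lam xb) '' simplexLe m))
    (x : Fin T → ℝ) (hx : ∀ t, x t ∈ Set.Icc (0 : ℝ) 1)
    (hbudget : ∑ t, p t * x t ≤ T * ρ) :
    ∑ t, (v t - p t) * x t + T * R ((T : ℝ)⁻¹ • ∑ t, x t • c t)
      ≤ ∑ t, fstar t (μ * p t + dot lam (c t)) + T * Rstar lam + T * ρ * μ := by
  have hT0 : (0:ℝ) < T := by exact_mod_cast hT
  set xb : Fin m → ℝ := (T : ℝ)⁻¹ • ∑ t, x t • c t with hxb
  have hxbmem : xb ∈ simplexLe m := by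
    constructor
    · intro i
      simp only [hxb, Pi.smul_apply, Finset.sum_apply, smul_eq_mul]
      exact mul_nonneg (by positivity)
        (Finset.sum_nonneg fun t _ => mul_nonneg (hx t).1 ((hc t).1 i))
    · have hsum : ∑ i, xb i = (T:ℝ)⁻¹ * ∑ t, x t := by
        simp only [hxb, Pi.smul_apply, Finset.sum_apply, smul_eq_mul,
          ← Finset.mul_sum]
        congr 1
        rw [Finset.sum_comm]
        refine Finset.sum_congr rfl fun t _ => ?_
        rw [← Finset.mul_sum, (hc t).2, mul_one]
      rw [hsum, inv_mul_le_iff₀ hT0]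
      calc ∑ t, x t ≤ ∑ _t : Fin T, (1:ℝ) := Finset.sum_le_sum fun t _ => (hx t).2
        _ = (T:ℝ) * 1 := by simp
  have hR : R xb + dot lam xb ≤ Rstar lam := by
    rw [hRstar]
    exact le_csSup hfin ⟨xb, hxbmem, rfl⟩
  have hdot : dot lam xb = (T:ℝ)⁻¹ * ∑ t, x t * dot lam (c t) := by
    simp only [dot, hxb, Pi.smul_apply, Finset.sum_apply, smul_eq_mul]
    calc ∑ i, lam i * ((T:ℝ)⁻¹ * ∑ t, x t * c t i)
        = ∑ i, ∑ t, (T:ℝ)⁻¹ * (x t * (lam i * c t i)) := by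
          simp only [Finset.mul_sum]
          exact Finset.sum_congr rfl fun i _ => Finset.sum_congr rfl fun t _ => by ring
      _ = ∑ t, ∑ i, (T:ℝ)⁻¹ * (x t * (lam i * c t i)) := Finset.sum_comm
      _ = (T:ℝ)⁻¹ * ∑ t, x t * ∑ i, lam i * c t i := by
          simp only [Finset.mul_sum]
  have hf : ∀ t, (v t - p t) * x t - (μ * p t + dot lam (c t)) * x t
      ≤ fstar t (μ * p t + dot lam (c t)) := by
    intro t
    rw [hfstar]
    refine le_csSup ?_ ⟨x t, hx t, rfl⟩
    exact IsCompact.bddAbove_image isCompact_Icc (by fun_prop)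
  have hsumf : ∑ t, ((v t - p t) * x t - (μ * p t + dot lam (c t)) * x t)
      ≤ ∑ t, fstar t (μ * p t + dot lam (c t)) :=
    Finset.sum_le_sum fun t _ => hf t
  have hexp : ∑ t, ((v t - p t) * x t - (μ * p t + dot lam (c t)) * x t)
      = ∑ t, (v t - p t) * x t - μ * ∑ t, p t * x t - ∑ t, x t * dot lam (c t) := by
    rw [Finset.sum_sub_distrib]
    have : ∑ t, (μ * p t + dot lam (c t)) * x t
        = μ * ∑ t, p t * x t + ∑ t, x t * dot lam (c t) := by
      rw [Finset.mul_sum, ← Finset.sum_add_distrib]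
      exact Finset.sum_congr rfl fun t _ => by ring
    rw [this]; ring
  have h1 : (T:ℝ) * dot lam xb = ∑ t, x t * dot lam (c t) := by
    rw [hdot, ← mul_assoc, mul_inv_cancel₀ hT0.ne', one_mul]
  have hRT : (T:ℝ) * R xb + (T:ℝ) * dot lam xb ≤ (T:ℝ) * Rstar lam := by
    have h := mul_le_mul_of_nonneg_left hR hT0.le
    rw [mul_add] at h; exact h
  have h2 : μ * ∑ t, p t * x t ≤ (T:ℝ) * ρ * μ :=
    calc μ * ∑ t, p t * x t ≤ μ * ((T:ℝ) * ρ) := mul_le_mul_of_nonneg_left hbudget hμ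
      _ = (T:ℝ) * ρ * μ := by ring
  rw [hexp] at hsumf
  linarith
end

section
/- Let I be a finite set of input tuples (v,p,c) with v ∈ [0,v̄], p ∈ [0,p̄], c ∈ Δ^m, let P be a probability distribution on I, and let the T input tuples (v_t,p_t,c_t) be drawn i.i.d. from P. Let R : Δ₊^m → ℝ be bounded with finite conjugate R*(−λ) = sup_{x̄∈Δ₊^m}{R(x̄) + ⟨λ,x̄⟩} for all λ ∈ ℝ^m. Then for every T ≥ 0 and every μ ≥ 0, λ ∈ ℝ^m, the expected offline optimum satisfies OPT(P) ≤ T·D(μ,λ|P), where D(μ,λ|P) = E_{(v,p,c)∼P}[f*(μp + ⟨λ,c⟩)] + R*(−λ) + ρμ and f*(s) = sup_{x∈[0,1]}{(v−p)x − s x}. -/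
open scoped BigOperators

/-- Expected weak duality: for input tuples drawn i.i.d. from a distribution
`P` on a finite set of tuples, the expected offline optimum satisfies
`OPT(P) ≤ T · D(μ, λ | P)` for every `T ≥ 0`, `μ ≥ 0` and `λ ∈ ℝ^m`, where
`D(μ, λ | P) = E[f*(μ p + ⟨λ, c⟩)] + R*(−λ) + ρ μ`. -/
theorem expected_weak_duality
    (m T : ℕ) (hm : 1 ≤ m) (ρ : ℝ) (hρ : 0 < ρ)
    (ι : Type) [Fintype ι] [Nonempty ι]
    (v p : ι → ℝ) (c : ι → Fin m → ℝ) (vbar pbar : ℝ)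
    (hv : ∀ i, v i ∈ Set.Icc (0 : ℝ) vbar) (hp : ∀ i, p i ∈ Set.Icc (0 : ℝ) pbar)
    (hc : ∀ i, c i ∈ simplexEq m)
    (P : ι → ℝ) (hP : ∀ i, 0 ≤ P i) (hPsum : ∑ i, P i = 1)
    (R : (Fin m → ℝ) → ℝ) (M : ℝ) (hRbdd : ∀ x ∈ simplexLe m, |R x| ≤ M)
    (Rstar : (Fin m → ℝ) → ℝ)
    (hRstar : ∀ lam : Fin m → ℝ,
      Rstar lam = sSup ((fun xb => R xb + dot lam xb) '' simplexLe m))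
    (hfin : ∀ lam : Fin m → ℝ, BddAbove ((fun xb => R xb + dot lam xb) '' simplexLe m))
    (fstar : ι → ℝ → ℝ)
    (hfstar : ∀ i s, fstar i s
      = sSup ((fun x => (v i - p i) * x - s * x) '' Set.Icc (0 : ℝ) 1))
    (Opt : (Fin T → ι) → ℝ)
    (hOpt : ∀ ω : Fin T → ι, Opt ω = sSup ((fun x : Fin T → ℝ =>
        ∑ t, (v (ω t) - p (ω t)) * x t + T * R ((T : ℝ)⁻¹ • ∑ t, x t • c (ω t))) ''
        {x : Fin T → ℝ | (∀ t, x t ∈ Set.Icc (0 : ℝ) 1) ∧ ∑ t, p (ω t) * x t ≤ T * ρ}))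
    (μ : ℝ) (lam : Fin m → ℝ) (hμ : 0 ≤ μ) :
    ∑ ω : Fin T → ι, (∏ t, P (ω t)) * Opt ω
      ≤ T * ((∑ i, P i * fstar i (μ * p i + dot lam (c i))) + Rstar lam + ρ * μ) := by
  classical
  set s : ι → ℝ := fun i => μ * p i + dot lam (c i) with hs
  set G : ι → ℝ := fun i => fstar i (s i) with hG
  -- Lemma A: fstar is an upper bound on the linear function over [0,1]
  have hA : ∀ i x, x ∈ Set.Icc (0:ℝ) 1 → (v i - p i) * x - s i * x ≤ G i := by
    intro i x hx
    have hGi : G i = sSup ((fun x => (v i - p i) * x - s i * x) '' Set.Icc (0 : ℝ) 1) :=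
      hfstar i (s i)
    rw [hGi]
    apply le_csSup
    · refine ⟨|v i - p i - s i|, ?_⟩
      rintro y ⟨z, hz, rfl⟩
      dsimp only
      have h1 : (v i - p i) * z - s i * z = (v i - p i - s i) * z := by ring
      rw [h1]
      calc (v i - p i - s i) * z ≤ |v i - p i - s i| * z :=
            mul_le_mul_of_nonneg_right (le_abs_self _) hz.1
        _ ≤ |v i - p i - s i| * 1 := mul_le_mul_of_nonneg_left hz.2 (abs_nonneg _)
        _ = _ := mul_one _
    · exact ⟨x, hx, rfl⟩
  -- Lemma B: Fenchel inequality for R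
  have hB : ∀ xb ∈ simplexLe m, R xb + dot lam xb ≤ Rstar lam := by
    intro xb hxb
    rw [hRstar]
    exact le_csSup (hfin lam) ⟨xb, hxb, rfl⟩
  -- Pointwise bound on Opt
  have hpoint : ∀ ω : Fin T → ι,
      Opt ω ≤ ∑ t, G (ω t) + T * Rstar lam + T * (ρ * μ) := by
    intro ω
    rw [hOpt]
    apply csSup_le
    · refine ⟨_, ⟨fun _ => 0, ⟨fun t => ⟨le_refl 0, zero_le_one⟩, ?_⟩, rfl⟩⟩
      simp only [mul_zero, Finset.sum_const_zero]
      positivity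
    rintro y ⟨x, ⟨hx01, hxp⟩, rfl⟩
    dsimp only
    rcases Nat.eq_zero_or_pos T with hT | hT
    · subst hT
      simp
    have hT' : (0:ℝ) < T := by exact_mod_cast hT
    set xb : Fin m → ℝ := (T:ℝ)⁻¹ • ∑ t, x t • c (ω t) with hxbdef
    have hsumx : ∑ t, x t ≤ (T:ℝ) := by
      calc ∑ t, x t ≤ ∑ _t : Fin T, (1:ℝ) := Finset.sum_le_sum (fun t _ => (hx01 t).2)
        _ = T := by simp
    have hxbmem : xb ∈ simplexLe m := by
      constructor
      · intro j
        simp only [hxbdef, Pi.smul_apply, Finset.sum_apply, smul_eq_mul]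
        apply mul_nonneg (by positivity)
        exact Finset.sum_nonneg fun t _ => mul_nonneg (hx01 t).1 ((hc (ω t)).1 j)
      · have hsj : ∑ j, xb j = (T:ℝ)⁻¹ * ∑ t, x t := by
          simp only [hxbdef, Pi.smul_apply, Finset.sum_apply, smul_eq_mul, ← Finset.mul_sum]
          congr 1
          rw [Finset.sum_comm]
          refine Finset.sum_congr rfl fun t _ => ?_
          rw [← Finset.mul_sum, (hc (ω t)).2, mul_one]
        rw [hsj, inv_mul_le_iff₀ hT', mul_one]
        exact hsumx
    have hdot : (T:ℝ) * dot lam xb = ∑ t, x t * dot lam (c (ω t)) := by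
      have h1 : dot lam xb = (T:ℝ)⁻¹ * ∑ t, x t * dot lam (c (ω t)) := by
        simp only [hxbdef, dot, Pi.smul_apply, Finset.sum_apply, smul_eq_mul, Finset.mul_sum]
        rw [Finset.sum_comm]
        exact Finset.sum_congr rfl fun t _ => Finset.sum_congr rfl fun j _ => by ring
      rw [h1, ← mul_assoc, mul_inv_cancel₀ (ne_of_gt hT'), one_mul]
    -- main chain
    have h2 := mul_le_mul_of_nonneg_left (hB xb hxbmem) hT'.le
    rw [mul_add] at h2
    have hRb : (T:ℝ) * R xb ≤ (T:ℝ) * Rstar lam - ∑ t, x t * dot lam (c (ω t)) := by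
      linarith [hdot]
    have hsum1 : ∑ t, (v (ω t) - p (ω t)) * x t
        ≤ ∑ t, G (ω t) + ∑ t, s (ω t) * x t := by
      rw [← Finset.sum_add_distrib]
      refine Finset.sum_le_sum fun t _ => ?_
      have := hA (ω t) (x t) (hx01 t)
      linarith
    have hsum2 : ∑ t, s (ω t) * x t
        = μ * ∑ t, p (ω t) * x t + ∑ t, x t * dot lam (c (ω t)) := by
      rw [Finset.mul_sum, ← Finset.sum_add_distrib]
      refine Finset.sum_congr rfl fun t _ => ?_
      simp only [hs]; ring
    have hbudget : μ * ∑ t, p (ω t) * x t ≤ μ * ((T:ℝ) * ρ) :=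
      mul_le_mul_of_nonneg_left hxp hμ
    have hring : μ * ((T:ℝ) * ρ) = (T:ℝ) * (ρ * μ) := by ring
    have hsum3 : ∑ t, s (ω t) * x t
        ≤ (T:ℝ) * (ρ * μ) + ∑ t, x t * dot lam (c (ω t)) := by
      rw [hsum2]; linarith
    linarith
  -- product-measure combinatorics
  have key : ∀ g : Fin T → ι → ℝ,
      (∑ ω : Fin T → ι, ∏ t, g t (ω t)) = ∏ t, ∑ i, g t i := by
    intro g
    rw [Finset.prod_univ_sum, Fintype.piFinset_univ]
  have wnonneg : ∀ ω : Fin T → ι, (0:ℝ) ≤ ∏ t, P (ω t) :=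
    fun ω => Finset.prod_nonneg fun t _ => hP (ω t)
  have wsum : (∑ ω : Fin T → ι, ∏ t, P (ω t)) = 1 := by
    rw [key (fun _ => P)]
    simp [hPsum]
  have hfix : ∀ t0 : Fin T,
      (∑ ω : Fin T → ι, (∏ t, P (ω t)) * G (ω t0)) = ∑ i, P i * G i := by
    intro t0
    have h1 : ∀ ω : Fin T → ι, (∏ t, P (ω t)) * G (ω t0)
        = ∏ t, (fun t i => P i * (if t = t0 then G i else 1)) t (ω t) := by
      intro ω
      dsimp only
      rw [Finset.prod_mul_distrib]
      congr 1
      rw [Finset.prod_ite_eq' Finset.univ t0 (fun t => G (ω t))]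
      simp
    calc (∑ ω : Fin T → ι, (∏ t, P (ω t)) * G (ω t0))
        = ∑ ω : Fin T → ι, ∏ t, (fun t i => P i * (if t = t0 then G i else 1)) t (ω t) :=
          Finset.sum_congr rfl fun ω _ => h1 ω
      _ = ∏ t, ∑ i, P i * (if t = t0 then G i else 1) :=
          key (fun t i => P i * (if t = t0 then G i else 1))
      _ = ∑ i, P i * G i := by
          rw [Finset.prod_eq_single t0]
          · simp
          · intro t _ ht
            simp [ht, hPsum]
          · simp
  -- combine
  have hswap : (∑ ω : Fin T → ι, (∏ t, P (ω t)) * ∑ t, G (ω t))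
      = (T:ℝ) * ∑ i, P i * G i := by
    have hms : ∀ ω : Fin T → ι, (∏ t, P (ω t)) * ∑ t, G (ω t)
        = ∑ t, (∏ t', P (ω t')) * G (ω t) := fun ω => Finset.mul_sum _ _ _
    rw [Finset.sum_congr rfl fun ω _ => hms ω, Finset.sum_comm,
      Finset.sum_congr rfl fun t0 _ => hfix t0, Finset.sum_const, Finset.card_univ]
    simp [nsmul_eq_mul]
  have step1 : ∑ ω : Fin T → ι, (∏ t, P (ω t)) * Opt ω
      ≤ ∑ ω : Fin T → ι, (∏ t, P (ω t)) *
          (∑ t, G (ω t) + T * Rstar lam + T * (ρ * μ)) :=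
    Finset.sum_le_sum fun ω _ => mul_le_mul_of_nonneg_left (hpoint ω) (wnonneg ω)
  have e1 : ∀ ω : Fin T → ι, (∏ t, P (ω t)) *
        (∑ t, G (ω t) + T * Rstar lam + T * (ρ * μ))
      = (∏ t, P (ω t)) * (∑ t, G (ω t))
        + (∏ t, P (ω t)) * ((T:ℝ) * Rstar lam + (T:ℝ) * (ρ * μ)) := fun ω => by ring
  have step2 : (∑ ω : Fin T → ι, (∏ t, P (ω t)) *
          (∑ t, G (ω t) + T * Rstar lam + T * (ρ * μ)))
      = (T:ℝ) * ∑ i, P i * G i + ((T:ℝ) * Rstar lam + (T:ℝ) * (ρ * μ)) := by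
    rw [Finset.sum_congr rfl fun ω _ => e1 ω, Finset.sum_add_distrib, hswap,
      ← Finset.sum_mul, wsum, one_mul]
  have final : (T:ℝ) * ∑ i, P i * G i + ((T:ℝ) * Rstar lam + (T:ℝ) * (ρ * μ))
      = T * ((∑ i, P i * fstar i (μ * p i + dot lam (c i))) + Rstar lam + ρ * μ) := by
    simp only [hG, hs]; ring
  calc ∑ ω : Fin T → ι, (∏ t, P (ω t)) * Opt ω
      ≤ (T:ℝ) * ∑ i, P i * G i + ((T:ℝ) * Rstar lam + (T:ℝ) * (ρ * μ)) := step2 ▸ step1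
    _ = _ := final
end

section
/- Let I be a finite set of input tuples (v,p,c) with v ∈ [0,v̄], p ∈ [0,p̄], c ∈ Δ^m, let P be a probability distribution on I, and let (v_t,p_t,c_t), t = 1,…,T, be drawn i.i.d. from P. Let R : Δ₊^m → ℝ be bounded with finite conjugate, and let, for each t, (μ_t,λ_t) ∈ ℝ≥0 × ℝ^m be a function of the first t−1 input tuples only, x_t ∈ [0,1] attain the maximum of (v_t−p_t)x − μ_t p_t x − ⟨λ_t, c_t⟩x over x ∈ [0,1], and x̄_t ∈ Δ₊^m attain the maximum of R(x̄) + ⟨λ_t, x̄⟩ over x̄ ∈ Δ₊^m. Let τ ≤ T be a stopping time of the input sequence (so that {τ ≥ t} depends only on the first t−1 inputs), and set μ̄ = (1/τ)∑_{t=1}^τ μ_t and λ̄ = (1/τ)∑_{t=1}^τ λ_t. Then E[∑_{t=1}^τ ((v_t−p_t)x_t + R(x̄_t))] ≥ E[τ·D(μ̄,λ̄|P) − ∑_{t=1}^τ (μ_t(ρ − p_t x_t) + ⟨λ_t, x̄_t − c_t x_t⟩)]. -/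
open scoped BigOperators

lemma dot_smul_left {m : ℕ} (r : ℝ) (a b : Fin m → ℝ) : dot (r • a) b = r * dot a b := by
  simp [dot, Finset.mul_sum, mul_assoc]

lemma dot_sum_left {m : ℕ} {α : Type*} (S : Finset α) (f : α → Fin m → ℝ) (b : Fin m → ℝ) :
    dot (∑ t ∈ S, f t) b = ∑ t ∈ S, dot (f t) b := by
  simp only [dot, Finset.sum_apply, Finset.sum_mul]
  exact Finset.sum_comm

lemma dot_sub_smul {m : ℕ} (a u : Fin m → ℝ) (r : ℝ) (b : Fin m → ℝ) :
    dot a (u - r • b) = dot a u - r * dot a b := by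
  simp only [dot, Pi.sub_apply, Pi.smul_apply, smul_eq_mul, mul_sub, Finset.sum_sub_distrib,
    Finset.mul_sum]
  congr 1
  apply Finset.sum_congr rfl
  intro i _
  ring

lemma linear_bdd (a : ℝ) : ∀ y ∈ (fun x => a * x) '' Set.Icc (0:ℝ) 1, y ≤ max a 0 := by
  rintro y ⟨z, ⟨hz0, hz1⟩, rfl⟩
  show a * z ≤ max a 0
  rcases le_or_gt 0 a with h | h
  · exact le_trans (by nlinarith) (le_max_left a 0)
  · exact le_trans (by nlinarith) (le_max_right a 0)

lemma sup_linear (a : ℝ) : sSup ((fun x => a * x) '' Set.Icc (0:ℝ) 1) = max a 0 := by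
  apply le_antisymm
  · exact csSup_le ⟨a * 0, Set.mem_image_of_mem _ ⟨le_rfl, zero_le_one⟩⟩ (linear_bdd a)
  · have hbdd : BddAbove ((fun x => a * x) '' Set.Icc (0:ℝ) 1) := ⟨max a 0, linear_bdd a⟩
    rcases le_or_gt 0 a with ha | ha
    · have h1 : max a 0 = a * 1 := by simp [max_eq_left ha]
      rw [h1]
      exact le_csSup hbdd (Set.mem_image_of_mem _ ⟨zero_le_one, le_rfl⟩)
    · have h1 : max a 0 = a * 0 := by simp [max_eq_right ha.le]
      rw [h1]
      exact le_csSup hbdd (Set.mem_image_of_mem _ ⟨le_rfl, zero_le_one⟩)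

lemma max_sum_le {α : Type*} (S : Finset α) (g : α → ℝ) :
    max (∑ t ∈ S, g t) 0 ≤ ∑ t ∈ S, max (g t) 0 :=
  max_le (Finset.sum_le_sum fun t _ => le_max_left _ _)
    (Finset.sum_nonneg fun t _ => le_max_right _ _)

lemma card_filter_coe_lt (T n : ℕ) (h : n ≤ T) :
    (Finset.univ.filter (fun t : Fin T => (t : ℕ) < n)).card = n := by
  have e : Finset.univ.filter (fun t : Fin T => (t : ℕ) < n)
      = Finset.map (Fin.castLEEmb h) Finset.univ := by
    ext t
    simp only [Finset.mem_filter, Finset.mem_univ, true_and, Finset.mem_map]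
    constructor
    · intro ht
      exact ⟨⟨(t : ℕ), ht⟩, by ext; rfl⟩
    · rintro ⟨u, -, rfl⟩
      exact u.isLt
  rw [e, Finset.card_map, Finset.card_univ, Fintype.card_fin]

def swapEquiv (ι : Type) (T : ℕ) (t : Fin T) : ((Fin T → ι) × ι) ≃ ((Fin T → ι) × ι) where
  toFun q := (Function.update q.1 t q.2, q.1 t)
  invFun q := (Function.update q.1 t q.2, q.1 t)
  left_inv := by
    rintro ⟨ω, i⟩
    simp [Function.update_idem, Function.update_eq_self]
  right_inv := by
    rintro ⟨ω, i⟩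
    simp [Function.update_idem, Function.update_eq_self]

lemma sum_update_swap {ι : Type} [Fintype ι] {T : ℕ} (P : ι → ℝ)
    (hPsum : ∑ i, P i = 1) (t : Fin T) (K : (Fin T → ι) → ℝ) :
    ∑ ω : Fin T → ι, (∏ s, P (ω s)) * K ω
      = ∑ ω : Fin T → ι, (∏ s, P (ω s)) * ∑ i, P i * K (Function.update ω t i) := by
  have key : ∀ (ω : Fin T → ι) (i : ι),
      (∏ s, P (Function.update ω t i s)) * P (ω t) = (∏ s, P (ω s)) * P i := by
    intro ω i
    rw [← Finset.mul_prod_erase Finset.univ (fun s => P (Function.update ω t i s))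
      (Finset.mem_univ t),
      ← Finset.mul_prod_erase Finset.univ (fun s => P (ω s)) (Finset.mem_univ t)]
    have h2 : ∏ s ∈ Finset.univ.erase t, P (Function.update ω t i s)
        = ∏ s ∈ Finset.univ.erase t, P (ω s) := by
      apply Finset.prod_congr rfl
      intro s hs
      rw [Function.update_of_ne (Finset.ne_of_mem_erase hs)]
    rw [h2, Function.update_self]
    ring
  have main : ∑ q : (Fin T → ι) × ι, (∏ s, P (q.1 s)) * P q.2 * K q.1
      = ∑ q : (Fin T → ι) × ι, (∏ s, P (q.1 s)) * P q.2 * K (Function.update q.1 t q.2) := by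
    calc ∑ q : (Fin T → ι) × ι, (∏ s, P (q.1 s)) * P q.2 * K q.1
        = ∑ q : (Fin T → ι) × ι,
            (∏ s, P ((swapEquiv ι T t q).1 s)) * P (swapEquiv ι T t q).2
              * K (swapEquiv ι T t q).1 :=
          (Equiv.sum_comp (swapEquiv ι T t)
            fun q => (∏ s, P (q.1 s)) * P q.2 * K q.1).symm
      _ = _ := by
          apply Finset.sum_congr rfl
          rintro ⟨ω, i⟩ -
          show (∏ s, P (Function.update ω t i s)) * P (ω t) * K (Function.update ω t i)
              = (∏ s, P (ω s)) * P i * K (Function.update ω t i)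
          rw [key]
  calc ∑ ω : Fin T → ι, (∏ s, P (ω s)) * K ω
      = ∑ ω : Fin T → ι, ∑ i, (∏ s, P (ω s)) * P i * K ω := by
        apply Finset.sum_congr rfl
        intro ω _
        rw [← Finset.sum_mul, ← Finset.mul_sum, hPsum, mul_one]
    _ = ∑ q : (Fin T → ι) × ι, (∏ s, P (q.1 s)) * P q.2 * K q.1 := by
        rw [Fintype.sum_prod_type]
    _ = ∑ q : (Fin T → ι) × ι, (∏ s, P (q.1 s)) * P q.2 * K (Function.update q.1 t q.2) := main
    _ = ∑ ω : Fin T → ι, ∑ i, (∏ s, P (ω s)) * P i * K (Function.update ω t i) := by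
        rw [Fintype.sum_prod_type]
    _ = _ := by
        apply Finset.sum_congr rfl
        intro ω _
        rw [Finset.mul_sum]
        apply Finset.sum_congr rfl
        intro i _
        ring

/-- Lower bound on the expected reward collected up to the budget-depletion
stopping time `τ`:
`E[∑_{t≤τ} ((v_t−p_t)x_t + R(x̄_t))] ≥ E[τ·D(μ̄,λ̄|P) − ∑_{t≤τ}(μ_t(ρ−p_t x_t) + ⟨λ_t, x̄_t − c_t x_t⟩)]`,
where the duals `(μ_t, λ_t)` are adapted (functions of the first `t−1` inputs), `x_t` maximizes
the opportunity-cost-adjusted reward, `x̄_t` maximizes `R(·) + ⟨λ_t, ·⟩` over `Δ₊^m`,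
`τ` is a stopping time, and `μ̄, λ̄` are the dual averages up to `τ`.
Expectations are sums over the i.i.d. product distribution on input sequences. -/
theorem reward_lower_bound
    (m T : ℕ) (hm : 1 ≤ m) (hT : 1 ≤ T) (ρ : ℝ) (hρ : 0 < ρ)
    (ι : Type) [Fintype ι] [Nonempty ι]
    (v p : ι → ℝ) (c : ι → Fin m → ℝ) (vbar pbar : ℝ)
    (hv : ∀ i, v i ∈ Set.Icc (0 : ℝ) vbar) (hp : ∀ i, p i ∈ Set.Icc (0 : ℝ) pbar)
    (hc : ∀ i, c i ∈ simplexEq m)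
    (P : ι → ℝ) (hP : ∀ i, 0 ≤ P i) (hPsum : ∑ i, P i = 1)
    (R : (Fin m → ℝ) → ℝ) (M : ℝ) (hRbdd : ∀ x ∈ simplexLe m, |R x| ≤ M)
    (fstar : ι → ℝ → ℝ)
    (hfstar : ∀ i s, fstar i s
      = sSup ((fun x => (v i - p i) * x - s * x) '' Set.Icc (0 : ℝ) 1))
    (Rstar : (Fin m → ℝ) → ℝ)
    (hRstar : ∀ lam : Fin m → ℝ,
      Rstar lam = sSup ((fun xb => R xb + dot lam xb) '' simplexLe m))
    (hfin : ∀ lam : Fin m → ℝ, BddAbove ((fun xb => R xb + dot lam xb) '' simplexLe m))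
    -- the Lagrangian dual function D(μ, λ | P)
    (Dfun : ℝ → (Fin m → ℝ) → ℝ)
    (hDfun : ∀ (a : ℝ) (b : Fin m → ℝ),
      Dfun a b = (∑ i, P i * fstar i (a * p i + dot b (c i))) + Rstar b + ρ * a)
    -- the dual iterates, adapted to the history
    (μ : Fin T → (Fin T → ι) → ℝ) (lam : Fin T → (Fin T → ι) → (Fin m → ℝ))
    (hμ0 : ∀ (t : Fin T) (ω : Fin T → ι), 0 ≤ μ t ω)
    (hμadapt : ∀ (t : Fin T) (ω ω' : Fin T → ι),
      (∀ s : Fin T, s < t → ω s = ω' s) → μ t ω = μ t ω')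
    (hlamadapt : ∀ (t : Fin T) (ω ω' : Fin T → ι),
      (∀ s : Fin T, s < t → ω s = ω' s) → lam t ω = lam t ω')
    -- the primal decisions
    (x : Fin T → (Fin T → ι) → ℝ)
    (hx : ∀ (t : Fin T) (ω : Fin T → ι), x t ω ∈ Set.Icc (0 : ℝ) 1 ∧
      ∀ y ∈ Set.Icc (0 : ℝ) 1,
        (v (ω t) - p (ω t)) * y - μ t ω * p (ω t) * y - dot (lam t ω) (c (ω t)) * y
          ≤ (v (ω t) - p (ω t)) * x t ω - μ t ω * p (ω t) * x t ω
              - dot (lam t ω) (c (ω t)) * x t ω)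
    (xbar : Fin T → (Fin T → ι) → (Fin m → ℝ))
    (hxbar : ∀ (t : Fin T) (ω : Fin T → ι), xbar t ω ∈ simplexLe m ∧
      ∀ z ∈ simplexLe m, R z + dot (lam t ω) z ≤ R (xbar t ω) + dot (lam t ω) (xbar t ω))
    -- the stopping time τ
    (τ : (Fin T → ι) → ℕ) (hτ1 : ∀ ω, 1 ≤ τ ω) (hτT : ∀ ω, τ ω ≤ T)
    (hstop : ∀ (n : ℕ) (ω ω' : Fin T → ι),
      (∀ s : Fin T, (s : ℕ) + 1 < n → ω s = ω' s) → (n ≤ τ ω ↔ n ≤ τ ω'))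
    -- the dual averages up to τ
    (mubar : (Fin T → ι) → ℝ) (lambar : (Fin T → ι) → (Fin m → ℝ))
    (hmubar : ∀ ω, mubar ω
      = (τ ω : ℝ)⁻¹ * ∑ t : Fin T, if (t : ℕ) < τ ω then μ t ω else 0)
    (hlambar : ∀ ω, lambar ω
      = (τ ω : ℝ)⁻¹ • ∑ t : Fin T, if (t : ℕ) < τ ω then lam t ω else 0) :
    ∑ ω : Fin T → ι, (∏ t, P (ω t)) *
        (∑ t : Fin T, if (t : ℕ) < τ ω then (v (ω t) - p (ω t)) * x t ω + R (xbar t ω) else 0)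
      ≥ ∑ ω : Fin T → ι, (∏ t, P (ω t)) *
          ((τ ω : ℝ) * Dfun (mubar ω) (lambar ω)
            - ∑ t : Fin T, if (t : ℕ) < τ ω then
                μ t ω * (ρ - p (ω t) * x t ω)
                  + dot (lam t ω) (xbar t ω - x t ω • c (ω t)) else 0) := by
  -- closed form of the conjugate f*
  have fstar_eq : ∀ i s, fstar i s = max (v i - p i - s) 0 := by
    intro i s
    rw [hfstar]
    have hfun : (fun y : ℝ => (v i - p i) * y - s * y) = fun y : ℝ => (v i - p i - s) * y := by
      funext y; ring
    rw [hfun, sup_linear]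
  -- value of f* at the maximizer x_t
  have hxval : ∀ (t : Fin T) (ω : Fin T → ι),
      fstar (ω t) (μ t ω * p (ω t) + dot (lam t ω) (c (ω t)))
        = (v (ω t) - p (ω t)) * x t ω - μ t ω * p (ω t) * x t ω
            - dot (lam t ω) (c (ω t)) * x t ω := by
    intro t ω
    obtain ⟨⟨hx0, hx1⟩, hmax⟩ := hx t ω
    rw [fstar_eq]
    have h1 := hmax 1 ⟨zero_le_one, le_rfl⟩
    have h0 := hmax 0 ⟨le_rfl, zero_le_one⟩
    apply le_antisymm
    · apply max_le
      · linarith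
      · linarith
    · have hVa : (v (ω t) - p (ω t)) * x t ω - μ t ω * p (ω t) * x t ω
            - dot (lam t ω) (c (ω t)) * x t ω
          = (v (ω t) - p (ω t) - (μ t ω * p (ω t) + dot (lam t ω) (c (ω t)))) * x t ω := by
        ring
      rw [hVa]
      calc (v (ω t) - p (ω t) - (μ t ω * p (ω t) + dot (lam t ω) (c (ω t)))) * x t ω
          ≤ max (v (ω t) - p (ω t) - (μ t ω * p (ω t) + dot (lam t ω) (c (ω t)))) 0 * x t ω :=
            mul_le_mul_of_nonneg_right (le_max_left _ _) hx0
        _ ≤ max (v (ω t) - p (ω t) - (μ t ω * p (ω t) + dot (lam t ω) (c (ω t)))) 0 * 1 :=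
            mul_le_mul_of_nonneg_left hx1 (le_max_right _ _)
        _ = _ := mul_one _
  -- Step 1 : pointwise Jensen inequality
  have key1 : ∀ ω : Fin T → ι, (τ ω : ℝ) * Dfun (mubar ω) (lambar ω)
      ≤ ∑ t : Fin T, if (t : ℕ) < τ ω then
          (∑ i, P i * fstar i (μ t ω * p i + dot (lam t ω) (c i)))
          + (R (xbar t ω) + dot (lam t ω) (xbar t ω) + ρ * μ t ω) else 0 := by
    intro ω
    have hnT := hτT ω
    have hn1 := hτ1 ω
    have hnpos : (0:ℝ) < (τ ω : ℝ) := by exact_mod_cast Nat.lt_of_lt_of_le Nat.zero_lt_one hn1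
    have hnne : (τ ω : ℝ) ≠ 0 := ne_of_gt hnpos
    set S : Finset (Fin T) := Finset.univ.filter (fun t : Fin T => (t : ℕ) < τ ω) with hS
    have hcard : S.card = τ ω := card_filter_coe_lt T (τ ω) hnT
    have hmu : mubar ω = (τ ω : ℝ)⁻¹ * ∑ t ∈ S, μ t ω := by
      rw [hmubar ω, hS, Finset.sum_filter]
    have hdotl : ∀ z : Fin m → ℝ,
        dot (lambar ω) z = (τ ω : ℝ)⁻¹ * ∑ t ∈ S, dot (lam t ω) z := by
      intro z
      rw [hlambar ω, dot_smul_left, ← dot_sum_left S (fun t => lam t ω) z]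
      congr 2
      rw [hS, Finset.sum_filter]
    -- the three termwise bounds
    have hterm1 : ∀ i, (τ ω : ℝ) * fstar i (mubar ω * p i + dot (lambar ω) (c i))
        ≤ ∑ t ∈ S, fstar i (μ t ω * p i + dot (lam t ω) (c i)) := by
      intro i
      rw [fstar_eq]
      have harg : mubar ω * p i + dot (lambar ω) (c i)
          = (τ ω : ℝ)⁻¹ * ∑ t ∈ S, (μ t ω * p i + dot (lam t ω) (c i)) := by
        rw [hmu, hdotl, Finset.sum_add_distrib, ← Finset.sum_mul]
        ring
      rw [harg]
      have h1 : (τ ω : ℝ) * max (v i - p i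
            - (τ ω : ℝ)⁻¹ * ∑ t ∈ S, (μ t ω * p i + dot (lam t ω) (c i))) 0
          = max (∑ t ∈ S, (v i - p i - (μ t ω * p i + dot (lam t ω) (c i)))) 0 := by
        rw [mul_max_of_nonneg _ _ hnpos.le, mul_zero]
        congr 1
        rw [Finset.sum_sub_distrib, Finset.sum_const, hcard, nsmul_eq_mul, mul_sub,
          ← mul_assoc, mul_inv_cancel₀ hnne, one_mul]
      rw [h1]
      refine le_trans (max_sum_le S _) (le_of_eq (Finset.sum_congr rfl fun t _ => ?_))
      rw [fstar_eq]
    have hterm2 : (τ ω : ℝ) * Rstar (lambar ω)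
        ≤ ∑ t ∈ S, (R (xbar t ω) + dot (lam t ω) (xbar t ω)) := by
      have h0mem : (fun _ : Fin m => (0:ℝ)) ∈ simplexLe m := ⟨fun i => le_rfl, by simp⟩
      have hb : Rstar (lambar ω)
          ≤ (τ ω : ℝ)⁻¹ * ∑ t ∈ S, (R (xbar t ω) + dot (lam t ω) (xbar t ω)) := by
        rw [hRstar]
        apply csSup_le ⟨_, Set.mem_image_of_mem _ h0mem⟩
        rintro y ⟨z, hz, rfl⟩
        show R z + dot (lambar ω) z ≤ _
        rw [hdotl]
        have hRz : R z = (τ ω : ℝ)⁻¹ * ∑ _t ∈ S, R z := by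
          rw [Finset.sum_const, hcard, nsmul_eq_mul, ← mul_assoc, inv_mul_cancel₀ hnne, one_mul]
        calc R z + (τ ω : ℝ)⁻¹ * ∑ t ∈ S, dot (lam t ω) z
            = (τ ω : ℝ)⁻¹ * ∑ t ∈ S, (R z + dot (lam t ω) z) := by
              rw [Finset.sum_add_distrib, mul_add, ← hRz]
          _ ≤ (τ ω : ℝ)⁻¹ * ∑ t ∈ S, (R (xbar t ω) + dot (lam t ω) (xbar t ω)) :=
              mul_le_mul_of_nonneg_left
                (Finset.sum_le_sum fun t _ => (hxbar t ω).2 z hz) (inv_nonneg.mpr hnpos.le)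
      calc (τ ω : ℝ) * Rstar (lambar ω)
          ≤ (τ ω : ℝ) * ((τ ω : ℝ)⁻¹ * ∑ t ∈ S, (R (xbar t ω) + dot (lam t ω) (xbar t ω))) :=
            mul_le_mul_of_nonneg_left hb hnpos.le
        _ = _ := by rw [← mul_assoc, mul_inv_cancel₀ hnne, one_mul]
    have hterm3 : (τ ω : ℝ) * (ρ * mubar ω) = ∑ t ∈ S, ρ * μ t ω := by
      rw [hmu, ← Finset.mul_sum]
      field_simp
    have hterm1tot : (τ ω : ℝ) * ∑ i, P i * fstar i (mubar ω * p i + dot (lambar ω) (c i))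
        ≤ ∑ t ∈ S, ∑ i, P i * fstar i (μ t ω * p i + dot (lam t ω) (c i)) := by
      rw [Finset.mul_sum]
      calc ∑ i, (τ ω : ℝ) * (P i * fstar i (mubar ω * p i + dot (lambar ω) (c i)))
          ≤ ∑ i, P i * ∑ t ∈ S, fstar i (μ t ω * p i + dot (lam t ω) (c i)) := by
            apply Finset.sum_le_sum
            intro i _
            have : (τ ω : ℝ) * (P i * fstar i (mubar ω * p i + dot (lambar ω) (c i)))
                = P i * ((τ ω : ℝ) * fstar i (mubar ω * p i + dot (lambar ω) (c i))) := by ring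
            rw [this]
            exact mul_le_mul_of_nonneg_left (hterm1 i) (hP i)
        _ = ∑ t ∈ S, ∑ i, P i * fstar i (μ t ω * p i + dot (lam t ω) (c i)) := by
            simp_rw [Finset.mul_sum]
            exact Finset.sum_comm
    -- combine
    have hgoal : ∑ t : Fin T, (if (t : ℕ) < τ ω then
          (∑ i, P i * fstar i (μ t ω * p i + dot (lam t ω) (c i)))
          + (R (xbar t ω) + dot (lam t ω) (xbar t ω) + ρ * μ t ω) else 0)
        = ∑ t ∈ S, ((∑ i, P i * fstar i (μ t ω * p i + dot (lam t ω) (c i)))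
          + (R (xbar t ω) + dot (lam t ω) (xbar t ω) + ρ * μ t ω)) := by
      rw [hS, Finset.sum_filter]
    rw [hgoal, hDfun]
    have hsplit : ∑ t ∈ S, ((∑ i, P i * fstar i (μ t ω * p i + dot (lam t ω) (c i)))
          + (R (xbar t ω) + dot (lam t ω) (xbar t ω) + ρ * μ t ω))
        = (∑ t ∈ S, ∑ i, P i * fstar i (μ t ω * p i + dot (lam t ω) (c i)))
          + ((∑ t ∈ S, (R (xbar t ω) + dot (lam t ω) (xbar t ω))) + ∑ t ∈ S, ρ * μ t ω) := by
      rw [← Finset.sum_add_distrib, ← Finset.sum_add_distrib]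
    rw [hsplit]
    have hexp : (τ ω : ℝ) * ((∑ i, P i * fstar i (mubar ω * p i + dot (lambar ω) (c i)))
          + Rstar (lambar ω) + ρ * mubar ω)
        = (τ ω : ℝ) * (∑ i, P i * fstar i (mubar ω * p i + dot (lambar ω) (c i)))
          + (τ ω : ℝ) * Rstar (lambar ω) + (τ ω : ℝ) * (ρ * mubar ω) := by ring
    rw [hexp, hterm3]
    have := add_le_add (add_le_add hterm1tot hterm2) (le_refl (∑ t ∈ S, ρ * μ t ω))
    linarith
  -- Step 2 : conditional-expectation swap for each t
  have key2 : ∀ t : Fin T,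
      (∑ ω : Fin T → ι, (∏ s, P (ω s)) *
          (if (t : ℕ) < τ ω then
            ∑ i, P i * fstar i (μ t ω * p i + dot (lam t ω) (c i)) else 0))
      = ∑ ω : Fin T → ι, (∏ s, P (ω s)) *
          (if (t : ℕ) < τ ω then
            fstar (ω t) (μ t ω * p (ω t) + dot (lam t ω) (c (ω t))) else 0) := by
    intro t
    rw [sum_update_swap P hPsum t
      (fun ω => if (t : ℕ) < τ ω then
        fstar (ω t) (μ t ω * p (ω t) + dot (lam t ω) (c (ω t))) else 0)]
    apply Finset.sum_congr rfl
    intro ω _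
    congr 1
    have hupdate : ∀ i : ι,
        (((t : ℕ) < τ (Function.update ω t i)) ↔ ((t : ℕ) < τ ω))
        ∧ μ t (Function.update ω t i) = μ t ω
        ∧ lam t (Function.update ω t i) = lam t ω := by
      intro i
      have hlt : ∀ s : Fin T, s < t → Function.update ω t i s = ω s := by
        intro s hs
        exact Function.update_of_ne (ne_of_lt hs) _ _
      refine ⟨?_, hμadapt t _ ω hlt, hlamadapt t _ ω hlt⟩
      have hst := hstop ((t : ℕ) + 1) (Function.update ω t i) ω ?_
      · constructor
        · intro h; exact Nat.lt_of_succ_le (hst.mp (Nat.succ_le_of_lt h))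
        · intro h; exact Nat.lt_of_succ_le (hst.mpr (Nat.succ_le_of_lt h))
      · intro s hs
        have hslt : s < t := by rw [Fin.lt_def]; omega
        exact Function.update_of_ne (ne_of_lt hslt) _ _
    by_cases hcond : (t : ℕ) < τ ω
    · rw [if_pos hcond]
      refine Finset.sum_congr rfl fun i _ => ?_
      have h := hupdate i
      rw [if_pos (h.1.mpr hcond), Function.update_self, h.2.1, h.2.2]
    · rw [if_neg hcond]
      exact (Finset.sum_eq_zero fun i _ => by
        rw [if_neg (fun hc => hcond ((hupdate i).1.mp hc)), mul_zero]).symm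
  -- Step 3 : pointwise rearrangement at the optimal x_t
  have step3 : ∀ (t : Fin T) (ω : Fin T → ι),
      fstar (ω t) (μ t ω * p (ω t) + dot (lam t ω) (c (ω t)))
        + (R (xbar t ω) + dot (lam t ω) (xbar t ω) + ρ * μ t ω)
      = ((v (ω t) - p (ω t)) * x t ω + R (xbar t ω))
        + (μ t ω * (ρ - p (ω t) * x t ω) + dot (lam t ω) (xbar t ω - x t ω • c (ω t))) := by
    intro t ω
    rw [hxval t ω, dot_sub_smul]
    ring
  -- assembly
  have hW : ∀ ω : Fin T → ι, (0:ℝ) ≤ ∏ t, P (ω t) :=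
    fun ω => Finset.prod_nonneg fun t _ => hP _
  have ifsplit : ∀ (q : Prop) [Decidable q] (a b : ℝ),
      (if q then a + b else 0) = (if q then a else 0) + (if q then b else 0) := by
    intro q _ a b
    split <;> simp
  have main : ∑ ω : Fin T → ι, (∏ t, P (ω t)) * ((τ ω : ℝ) * Dfun (mubar ω) (lambar ω))
      ≤ ∑ ω : Fin T → ι, (∏ t, P (ω t)) *
          ((∑ t : Fin T, if (t : ℕ) < τ ω then
              (v (ω t) - p (ω t)) * x t ω + R (xbar t ω) else 0)
            + ∑ t : Fin T, if (t : ℕ) < τ ω then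
                μ t ω * (ρ - p (ω t) * x t ω)
                  + dot (lam t ω) (xbar t ω - x t ω • c (ω t)) else 0) := by
    calc ∑ ω : Fin T → ι, (∏ t, P (ω t)) * ((τ ω : ℝ) * Dfun (mubar ω) (lambar ω))
        ≤ ∑ ω : Fin T → ι, (∏ t, P (ω t)) *
            (∑ t : Fin T, if (t : ℕ) < τ ω then
              (∑ i, P i * fstar i (μ t ω * p i + dot (lam t ω) (c i)))
              + (R (xbar t ω) + dot (lam t ω) (xbar t ω) + ρ * μ t ω) else 0) :=
          Finset.sum_le_sum fun ω _ => mul_le_mul_of_nonneg_left (key1 ω) (hW ω)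
      _ = ∑ ω : Fin T → ι, ((∏ t, P (ω t)) *
            (∑ t : Fin T, if (t : ℕ) < τ ω then
              (∑ i, P i * fstar i (μ t ω * p i + dot (lam t ω) (c i))) else 0)
            + (∏ t, P (ω t)) *
            (∑ t : Fin T, if (t : ℕ) < τ ω then
              (R (xbar t ω) + dot (lam t ω) (xbar t ω) + ρ * μ t ω) else 0)) := by
          apply Finset.sum_congr rfl
          intro ω _
          rw [← mul_add, ← Finset.sum_add_distrib]
          congr 1
          apply Finset.sum_congr rfl
          intro t _
          rw [← ifsplit]
      _ = ∑ ω : Fin T → ι, ((∏ t, P (ω t)) *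
            (∑ t : Fin T, if (t : ℕ) < τ ω then
              fstar (ω t) (μ t ω * p (ω t) + dot (lam t ω) (c (ω t))) else 0)
            + (∏ t, P (ω t)) *
            (∑ t : Fin T, if (t : ℕ) < τ ω then
              (R (xbar t ω) + dot (lam t ω) (xbar t ω) + ρ * μ t ω) else 0)) := by
          -- swap sums over ω and t, apply key2 per t
          have com : ∀ (F : Fin T → (Fin T → ι) → ℝ),
              ∑ ω : Fin T → ι, (∏ t, P (ω t)) *
                  (∑ t : Fin T, if (t : ℕ) < τ ω then F t ω else 0)
                = ∑ t : Fin T, ∑ ω : Fin T → ι, (∏ s, P (ω s)) *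
                    (if (t : ℕ) < τ ω then F t ω else 0) := by
            intro F
            simp_rw [Finset.mul_sum]
            exact Finset.sum_comm
          have swapped :
              (∑ ω : Fin T → ι, (∏ t, P (ω t)) *
                (∑ t : Fin T, if (t : ℕ) < τ ω then
                  (∑ i, P i * fstar i (μ t ω * p i + dot (lam t ω) (c i))) else 0))
              = ∑ ω : Fin T → ι, (∏ t, P (ω t)) *
                (∑ t : Fin T, if (t : ℕ) < τ ω then
                  fstar (ω t) (μ t ω * p (ω t) + dot (lam t ω) (c (ω t))) else 0) := by
            rw [com, com]
            exact Finset.sum_congr rfl fun t _ => key2 t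
          calc ∑ ω : Fin T → ι, ((∏ t, P (ω t)) *
                (∑ t : Fin T, if (t : ℕ) < τ ω then
                  (∑ i, P i * fstar i (μ t ω * p i + dot (lam t ω) (c i))) else 0)
                + (∏ t, P (ω t)) *
                (∑ t : Fin T, if (t : ℕ) < τ ω then
                  (R (xbar t ω) + dot (lam t ω) (xbar t ω) + ρ * μ t ω) else 0))
              = (∑ ω : Fin T → ι, (∏ t, P (ω t)) *
                (∑ t : Fin T, if (t : ℕ) < τ ω then
                  (∑ i, P i * fstar i (μ t ω * p i + dot (lam t ω) (c i))) else 0))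
                + ∑ ω : Fin T → ι, (∏ t, P (ω t)) *
                (∑ t : Fin T, if (t : ℕ) < τ ω then
                  (R (xbar t ω) + dot (lam t ω) (xbar t ω) + ρ * μ t ω) else 0) :=
              Finset.sum_add_distrib
            _ = (∑ ω : Fin T → ι, (∏ t, P (ω t)) *
                (∑ t : Fin T, if (t : ℕ) < τ ω then
                  fstar (ω t) (μ t ω * p (ω t) + dot (lam t ω) (c (ω t))) else 0))
                + ∑ ω : Fin T → ι, (∏ t, P (ω t)) *
                (∑ t : Fin T, if (t : ℕ) < τ ω then
                  (R (xbar t ω) + dot (lam t ω) (xbar t ω) + ρ * μ t ω) else 0) := by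
              rw [swapped]
            _ = _ := Finset.sum_add_distrib.symm
      _ = _ := by
          apply Finset.sum_congr rfl
          intro ω _
          rw [← mul_add]
          congr 1
          rw [← Finset.sum_add_distrib, ← Finset.sum_add_distrib]
          apply Finset.sum_congr rfl
          intro t _
          rw [← ifsplit, ← ifsplit]
          by_cases hcond : (t : ℕ) < τ ω
          · simp only [if_pos hcond]
            exact step3 t ω
          · simp only [if_neg hcond]
  -- conclude
  rw [ge_iff_le]
  have lhs_eq : ∑ ω : Fin T → ι, (∏ t, P (ω t)) *
        ((τ ω : ℝ) * Dfun (mubar ω) (lambar ω)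
          - ∑ t : Fin T, if (t : ℕ) < τ ω then
              μ t ω * (ρ - p (ω t) * x t ω)
                + dot (lam t ω) (xbar t ω - x t ω • c (ω t)) else 0)
      = (∑ ω : Fin T → ι, (∏ t, P (ω t)) * ((τ ω : ℝ) * Dfun (mubar ω) (lambar ω)))
        - ∑ ω : Fin T → ι, (∏ t, P (ω t)) *
            (∑ t : Fin T, if (t : ℕ) < τ ω then
              μ t ω * (ρ - p (ω t) * x t ω)
                + dot (lam t ω) (xbar t ω - x t ω • c (ω t)) else 0) := by
    rw [← Finset.sum_sub_distrib]
    exact Finset.sum_congr rfl fun ω _ => mul_sub _ _ _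
  rw [lhs_eq]
  have rhs_eq : ∑ ω : Fin T → ι, (∏ t, P (ω t)) *
        ((∑ t : Fin T, if (t : ℕ) < τ ω then
            (v (ω t) - p (ω t)) * x t ω + R (xbar t ω) else 0)
          + ∑ t : Fin T, if (t : ℕ) < τ ω then
              μ t ω * (ρ - p (ω t) * x t ω)
                + dot (lam t ω) (xbar t ω - x t ω • c (ω t)) else 0)
      = (∑ ω : Fin T → ι, (∏ t, P (ω t)) *
          (∑ t : Fin T, if (t : ℕ) < τ ω then
            (v (ω t) - p (ω t)) * x t ω + R (xbar t ω) else 0))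
        + ∑ ω : Fin T → ι, (∏ t, P (ω t)) *
            (∑ t : Fin T, if (t : ℕ) < τ ω then
              μ t ω * (ρ - p (ω t) * x t ω)
                + dot (lam t ω) (xbar t ω - x t ω • c (ω t)) else 0) := by
    rw [← Finset.sum_add_distrib]
    exact Finset.sum_congr rfl fun ω _ => mul_add _ _ _
  rw [rhs_eq] at main
  linarith
end
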